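/- arXiv:1307.4696 — 2 statements merged into one kernel-verified Lean document; each statement's English description precedes it below -/
import Mathlib

section
/- Let H be a complex Hilbert space and (Z_n)_{n≥1} a sequence of mutually orthogonal projections with ∑ Z_n = I strongly. Let S ∈ B(H) commute with all Z_n and define T = ∑_n n S Z_n on its maximal domain. If S is non-negative then T is non-negative; if S is self-adjoint then T is self-adjoint. -/
/-!
Each `Zₙ H` reduces `T`, which acts there as the bounded operator `wₙ S Zₙ`. Self-adjointness of
`S Zₙ` makes `T` symmetric, so `T ≤ T†`. Conversely, testing `η ∈ dom T†` against the vectors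
`Zₙ ξ ∈ dom T` gives `Zₙ (T† η) = wₙ S Zₙ η`; summing over `n` (with Pythagoras for the square
summability) puts `(η, T† η)` in the graph of `T`, so `T† ≤ T`. Positivity follows from
`⟪T ξ, ξ⟫ = ∑ₙ wₙ ⟪S Zₙ ξ, Zₙ ξ⟫`.
-/

open scoped InnerProductSpace LinearPMap

lemma HasSum.const_inner {ι 𝕜 E : Type*} [RCLike 𝕜] [SeminormedAddCommGroup E]
    [InnerProductSpace 𝕜 E] {f : ι → E} {a : E} (h : HasSum f a) (y : E) :
    HasSum (fun i => ⟪y, f i⟫_𝕜) ⟪y, a⟫_𝕜 :=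
  (innerSL 𝕜 y).hasSum h

lemma HasSum.inner_const {ι 𝕜 E : Type*} [RCLike 𝕜] [SeminormedAddCommGroup E]
    [InnerProductSpace 𝕜 E] {f : ι → E} {a : E} (h : HasSum f a) (y : E) :
    HasSum (fun i => ⟪f i, y⟫_𝕜) ⟪a, y⟫_𝕜 := by
  simpa only [RCLike.star_def, inner_conj_symm] using (h.const_inner (𝕜 := 𝕜) y).star

section

variable {H : Type*} [NormedAddCommGroup H] [InnerProductSpace ℂ H]

lemma ContinuousLinearMap.IsIdempotentElem.apply_apply {P : H →L[ℂ] H} (hP : IsIdempotentElem P)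
    (x : H) : P (P x) = P x :=
  DFunLike.congr_fun hP.eq x

lemma IsStarProjection.inner_apply_self_eq_norm_sq [CompleteSpace H] {P : H →L[ℂ] H}
    (hP : IsStarProjection P) (x : H) : ⟪x, P x⟫_ℂ = (‖P x‖ : ℂ) ^ 2 := by
  have h : ⟪P x, P x⟫_ℂ = ⟪x, P (P x)⟫_ℂ := hP.isSelfAdjoint.isSymmetric x (P x)
  rw [ContinuousLinearMap.IsIdempotentElem.apply_apply hP.isIdempotentElem] at h
  rw [← h]
  exact_mod_cast inner_self_eq_norm_sq_to_K (P x)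

lemma hasSum_norm_sq_of_isStarProjection [CompleteSpace H] {Z : ℕ → H →L[ℂ] H}
    (hZ : ∀ n, IsStarProjection (Z n)) {ξ : H} (hξ : HasSum (fun n => Z n ξ) ξ) :
    HasSum (fun n => ‖Z n ξ‖ ^ 2) (‖ξ‖ ^ 2) := by
  have h := hξ.const_inner (𝕜 := ℂ) ξ
  rw [inner_self_eq_norm_sq_to_K] at h
  simp only [(hZ _).inner_apply_self_eq_norm_sq] at h
  exact Complex.hasSum_ofReal.mp (by push_cast; exact h)

lemma inner_real_smul_apply_apply_of_commute [CompleteSpace H] {S P : H →L[ℂ] H}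
    (hS : IsSelfAdjoint S) (hP : IsSelfAdjoint P) (hSP : Commute S P) (r : ℝ) (x y : H) :
    ⟪r • S (P x), y⟫_ℂ = ⟪x, r • S (P y)⟫_ℂ := by
  have hsymm : (S * P : H →L[ℂ] H).IsSymmetric := ((hS.commute_iff hP).mp hSP).isSymmetric
  rw [RCLike.real_smul_eq_coe_smul (K := ℂ), RCLike.real_smul_eq_coe_smul (K := ℂ),
    inner_smul_left, inner_smul_right, RCLike.conj_ofReal]
  exact congrArg _ (hsymm x y)

namespace LinearPMap

/-- `T = ∑ₙ wₙ • S Zₙ` on its maximal domain. -/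
def IsWeightedSum (T : H →ₗ.[ℂ] H) (S : H →L[ℂ] H) (Z : ℕ → H →L[ℂ] H) (w : ℕ → ℝ) : Prop :=
  ∀ ξ η : H, (ξ, η) ∈ T.graph ↔
    Summable (fun n => w n ^ 2 * ‖S (Z n ξ)‖ ^ 2) ∧ HasSum (fun n => w n • S (Z n ξ)) η

namespace IsWeightedSum

variable {T : H →ₗ.[ℂ] H} {S : H →L[ℂ] H} {Z : ℕ → H →L[ℂ] H} {w : ℕ → ℝ}

lemma hasSum_apply (hT : T.IsWeightedSum S Z w) (ξ : T.domain) :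
    HasSum (fun n => w n • S (Z n ξ)) (T ξ) :=
  ((hT ξ (T ξ)).mp (T.mem_graph ξ)).2

lemma mem_graph_proj (hT : T.IsWeightedSum S Z w) (hZ : ∀ n, IsIdempotentElem (Z n))
    (horth : ∀ n m, n ≠ m → Z n * Z m = 0) (n : ℕ) (x : H) :
    (Z n x, w n • S (Z n x)) ∈ T.graph := by
  have hvanish : ∀ m ≠ n, Z m (Z n x) = 0 := fun m hm => by
    simpa using DFunLike.congr_fun (horth m n hm) x
  rw [hT]
  constructor
  · exact summable_of_ne_finset_zero (s := {n}) fun m hm => by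
      simp [hvanish m (by simpa using hm)]
  · simpa [ContinuousLinearMap.IsIdempotentElem.apply_apply (hZ n)] using
      hasSum_single (f := fun m => w m • S (Z m (Z n x))) n fun m hm => by simp [hvanish m hm]

lemma proj_mem_domain (hT : T.IsWeightedSum S Z w) (hZ : ∀ n, IsIdempotentElem (Z n))
    (horth : ∀ n m, n ≠ m → Z n * Z m = 0) (n : ℕ) (x : H) : Z n x ∈ T.domain :=
  T.mem_domain_of_mem_graph (hT.mem_graph_proj hZ horth n x)

lemma apply_proj (hT : T.IsWeightedSum S Z w) (hZ : ∀ n, IsIdempotentElem (Z n))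
    (horth : ∀ n m, n ≠ m → Z n * Z m = 0) (n : ℕ) (x : H) :
    T ⟨Z n x, hT.proj_mem_domain hZ horth n x⟩ = w n • S (Z n x) :=
  T.mem_graph_snd_inj (T.mem_graph _) (hT.mem_graph_proj hZ horth n x) rfl

lemma dense_domain (hT : T.IsWeightedSum S Z w) (hZ : ∀ n, IsIdempotentElem (Z n))
    (horth : ∀ n m, n ≠ m → Z n * Z m = 0) (hsum : ∀ ξ, HasSum (fun n => Z n ξ) ξ) :
    Dense (T.domain : Set H) := fun ξ =>
  mem_closure_of_tendsto (hsum ξ).tendsto_sum_nat <| .of_forall fun _ =>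
    Submodule.sum_mem _ fun n _ => hT.proj_mem_domain hZ horth n ξ

variable [CompleteSpace H]

lemma isFormalAdjoint_self (hT : T.IsWeightedSum S Z w) (hS : IsSelfAdjoint S)
    (hZ : ∀ n, IsSelfAdjoint (Z n)) (hcomm : ∀ n, Commute S (Z n)) : T.IsFormalAdjoint T := by
  intro x y
  have hyx : HasSum (fun n => ⟪w n • S (Z n x), (y : H)⟫_ℂ) ⟪(x : H), T y⟫_ℂ := by
    simpa only [inner_real_smul_apply_apply_of_commute hS (hZ _) (hcomm _)] using
      (hT.hasSum_apply y).const_inner (x : H)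
  exact ((hT.hasSum_apply x).inner_const (y : H)).unique hyx

lemma proj_adjoint_apply (hT : T.IsWeightedSum S Z w) (hS : IsSelfAdjoint S)
    (hZ : ∀ n, IsStarProjection (Z n)) (horth : ∀ n m, n ≠ m → Z n * Z m = 0)
    (hsum : ∀ ξ, HasSum (fun n => Z n ξ) ξ) (hcomm : ∀ n, Commute S (Z n))
    (η : T†.domain) (n : ℕ) : Z n (T† η) = w n • S (Z n η) := by
  have hidem n := (hZ n).isIdempotentElem
  refine ext_inner_right ℂ fun ξ => ?_
  calc ⟪Z n (T† η), ξ⟫_ℂ = ⟪T† η, Z n ξ⟫_ℂ := (hZ n).isSelfAdjoint.isSymmetric _ _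
    _ = ⟪(η : H), T ⟨Z n ξ, hT.proj_mem_domain hidem horth n ξ⟩⟫_ℂ :=
      T.adjoint_isFormalAdjoint (hT.dense_domain hidem horth hsum) η
        ⟨Z n ξ, hT.proj_mem_domain hidem horth n ξ⟩
    _ = ⟪(η : H), w n • S (Z n ξ)⟫_ℂ := by rw [hT.apply_proj hidem horth]
    _ = ⟪w n • S (Z n η), ξ⟫_ℂ :=
      (inner_real_smul_apply_apply_of_commute hS (hZ n).isSelfAdjoint (hcomm n) _ _ _).symm

lemma adjoint_le (hT : T.IsWeightedSum S Z w) (hS : IsSelfAdjoint S)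
    (hZ : ∀ n, IsStarProjection (Z n)) (horth : ∀ n m, n ≠ m → Z n * Z m = 0)
    (hsum : ∀ ξ, HasSum (fun n => Z n ξ) ξ) (hcomm : ∀ n, Commute S (Z n)) : T† ≤ T := by
  refine le_of_le_graph fun ⟨x, y⟩ hxy => ?_
  obtain ⟨η, rfl, rfl⟩ := (mem_graph_iff _).mp hxy
  have hproj := hT.proj_adjoint_apply hS hZ horth hsum hcomm η
  refine (hT _ _).mpr ⟨?_, ?_⟩
  · refine (hasSum_norm_sq_of_isStarProjection hZ (hsum (T† η))).summable.congr fun n => ?_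
    rw [hproj, norm_smul, mul_pow, Real.norm_eq_abs, sq_abs]
  · simpa only [hproj] using hsum (T† η)

theorem isSelfAdjoint (hT : T.IsWeightedSum S Z w) (hS : IsSelfAdjoint S)
    (hZ : ∀ n, IsStarProjection (Z n)) (horth : ∀ n m, n ≠ m → Z n * Z m = 0)
    (hsum : ∀ ξ, HasSum (fun n => Z n ξ) ξ) (hcomm : ∀ n, Commute S (Z n)) : IsSelfAdjoint T :=
  le_antisymm (hT.adjoint_le hS hZ horth hsum hcomm) <|
    (hT.isFormalAdjoint_self hS (fun n => (hZ n).isSelfAdjoint) hcomm).le_adjoint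
      (hT.dense_domain (fun n => (hZ n).isIdempotentElem) horth hsum)

theorem re_inner_apply_self_nonneg (hT : T.IsWeightedSum S Z w) (hw : ∀ n, 0 ≤ w n)
    (hS : S.IsPositive) (hZ : ∀ n, IsStarProjection (Z n)) (hcomm : ∀ n, Commute S (Z n))
    (ξ : T.domain) : 0 ≤ (⟪T ξ, ξ⟫_ℂ).re := by
  refine (((hT.hasSum_apply ξ).inner_const (ξ : H)).mapL Complex.reCLM).nonneg fun n => ?_
  have hfix : S (Z n ξ) = Z n (S (Z n ξ)) :=
    calc S (Z n ξ) = S (Z n (Z n ξ)) := by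
          rw [ContinuousLinearMap.IsIdempotentElem.apply_apply (hZ n).isIdempotentElem]
      _ = Z n (S (Z n ξ)) := DFunLike.congr_fun (hcomm n).eq _
  have hterm : ⟪S (Z n ξ), (ξ : H)⟫_ℂ = ⟪S (Z n ξ), Z n ξ⟫_ℂ := by
    conv_lhs => rw [hfix]
    exact (hZ n).isSelfAdjoint.isSymmetric _ _
  rw [Complex.reCLM_apply, RCLike.real_smul_eq_coe_smul (K := ℂ), inner_smul_real_left, hterm,
    Complex.smul_re, smul_eq_mul]
  exact mul_nonneg (hw n) (hS.re_inner_nonneg_left _)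

end IsWeightedSum

end LinearPMap

end

/-- Let `(Z n)` (n ≥ 1, here indexed by `n+1` for `n : ℕ`) be mutually
orthogonal projections with `∑ Z n = I` strongly, and let `S` be a bounded operator
commuting with all `Z n`. Let `T = ∑ n S Z n` on its maximal domain (described via its
graph). If `S` is non-negative then `T` is non-negative; if `S` is self-adjoint then `T`
is self-adjoint. -/
theorem stmt13 {H : Type*} [NormedAddCommGroup H] [InnerProductSpace ℂ H] [CompleteSpace H]
    (Z : ℕ → H →L[ℂ] H) (S : H →L[ℂ] H)
    (hproj : ∀ n, IsIdempotentElem (Z n) ∧ IsSelfAdjoint (Z n))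
    (horth : ∀ n m, n ≠ m → Z n * Z m = 0)
    (hsumI : ∀ ξ : H, HasSum (fun n => Z n ξ) ξ)
    (hcomm : ∀ n, S * Z n = Z n * S)
    (T : H →ₗ.[ℂ] H)
    (hT : ∀ ξ η : H, (ξ, η) ∈ T.graph ↔
      Summable (fun n : ℕ => ((n : ℝ) + 1) ^ 2 * ‖S (Z n ξ)‖ ^ 2) ∧
        HasSum (fun n : ℕ => ((n : ℝ) + 1) • S (Z n ξ)) η) :
    (0 ≤ S → IsSelfAdjoint T ∧ ∀ ξ : T.domain, 0 ≤ (inner ℂ (T ξ) (ξ : H) : ℂ).re) ∧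
      (IsSelfAdjoint S → IsSelfAdjoint T) := by
  have hZ n : IsStarProjection (Z n) := ⟨(hproj n).1, (hproj n).2⟩
  have hT' : T.IsWeightedSum S Z (fun n => (n : ℝ) + 1) := hT
  refine ⟨fun hS => ?_, fun hS => hT'.isSelfAdjoint hS hZ horth hsumI hcomm⟩
  rw [ContinuousLinearMap.nonneg_iff_isPositive] at hS
  exact ⟨hT'.isSelfAdjoint hS.isSelfAdjoint hZ horth hsumI hcomm,
    hT'.re_inner_apply_self_nonneg (fun n => by positivity) hS hZ hcomm⟩
end

section
/- Let H be a complex Hilbert space, (P_k)_{k≥1} mutually orthogonal projections on H, and define for N ≥ 0 the operator T_N = ∑_{k=N+1}^∞ 2^k P_k with maximal domain. If φ(T_0) is a densely defined non-negative operator and for every N, φ(T_0) = N·Z + φ(T_N) with Z a nonzero projection and φ(T_N) non-negative, then a contradiction follows: specifically, for every ξ in the domain of φ(T_0), ⟨φ(T_0)ξ, ξ⟩ ≥ N‖Zξ‖² for all N, forcing Zξ = 0, contradicting density of the domain. -/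
open RCLike
open scoped InnerProductSpace

theorem nonpos_of_forall_nat_mul_le {α : Type*} [Field α] [LinearOrder α] [IsStrictOrderedRing α]
    [Archimedean α] {a c : α} (h : ∀ N : ℕ, N * a ≤ c) : a ≤ 0 := by
  by_contra! ha
  obtain ⟨N, hN⟩ := exists_nat_gt (c / a)
  rw [div_lt_iff₀ ha] at hN
  exact (h N).not_gt hN

section StarProjection

variable {𝕜 E : Type*} [RCLike 𝕜] [NormedAddCommGroup E] [InnerProductSpace 𝕜 E] [CompleteSpace E]
  {Z : E →L[𝕜] E}

theorem IsStarProjection.re_inner_apply_self (hZ : IsStarProjection Z) (x : E) :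
    re ⟪Z x, x⟫_𝕜 = ‖Z x‖ ^ 2 := by
  have hZZ : Z (Z x) = Z x := congr($(hZ.isIdempotentElem.eq) x)
  calc re ⟪Z x, x⟫_𝕜 = re ⟪Z (Z x), x⟫_𝕜 := by rw [hZZ]
    _ = re ⟪Z x, Z x⟫_𝕜 := congrArg re (hZ.isSelfAdjoint.isSymmetric (Z x) x)
    _ = ‖Z x‖ ^ 2 := inner_self_eq_norm_sq (Z x)

theorem IsStarProjection.mul_norm_sq_le_re_inner_smul_add (hZ : IsStarProjection Z) (t : ℝ)
    {x b : E} (hb : 0 ≤ re ⟪b, x⟫_𝕜) : t * ‖Z x‖ ^ 2 ≤ re ⟪(t : 𝕜) • Z x + b, x⟫_𝕜 := by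
  rw [inner_add_left, map_add, inner_smul_left, conj_ofReal, re_ofReal_mul,
    hZ.re_inner_apply_self]
  linarith

end StarProjection

theorem eq_zero_of_forall_nat_mul_norm_sq_le {E : Type*} [NormedAddCommGroup E] {v : E} {c : ℝ}
    (h : ∀ N : ℕ, N * ‖v‖ ^ 2 ≤ c) : v = 0 :=
  norm_eq_zero.mp <| pow_eq_zero_iff two_ne_zero |>.mp <|
    le_antisymm (nonpos_of_forall_nat_mul_le h) (by positivity)

theorem stmt17_general {H : Type*} [NormedAddCommGroup H] [InnerProductSpace ℂ H] [CompleteSpace H]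
    (Z : H →L[ℂ] H) (hZ : IsIdempotentElem Z ∧ IsSelfAdjoint Z) (hZ0 : Z ≠ 0)
    (A : H →ₗ.[ℂ] H) (hdense : Dense (A.domain : Set H))
    (hrel : ∀ N : ℕ, ∃ B : A.domain → H,
      (∀ ξ : A.domain, 0 ≤ (inner ℂ (B ξ) (ξ : H) : ℂ).re) ∧
        ∀ ξ : A.domain, A ξ = (N : ℝ) • Z (ξ : H) + B ξ) :
    False := by
  have hZ' : IsStarProjection Z := ⟨hZ.1, hZ.2⟩
  have hvanish : ∀ ξ : A.domain, Z ξ = 0 := fun ξ ↦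
    eq_zero_of_forall_nat_mul_norm_sq_le (c := re ⟪A ξ, ξ⟫_ℂ) fun N ↦ by
      obtain ⟨B, hB, hAB⟩ := hrel N
      rw [hAB ξ, real_smul_eq_coe_smul (K := ℂ)]
      exact hZ'.mul_norm_sq_le_re_inner_smul_add N (hB ξ)
  exact hZ0 <| DFunLike.coe_injective <|
    Continuous.ext_on hdense Z.continuous continuous_zero fun y hy ↦ hvanish ⟨y, hy⟩

/-- Let `(P k)` be mutually orthogonal projections, `Z` a nonzero orthogonal
projection, and `A = φ(T₀)` a densely defined non-negative operator such that for every
`N` there is a non-negative operator `B = φ(T_N)` (on the same domain) with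
`A = N • Z + B`. Then a contradiction follows: for every `ξ` in the domain of `A`,
`⟨Aξ, ξ⟩ ≥ N ‖Z ξ‖²` for all `N`, forcing `Z ξ = 0` on a dense set, contradicting
`Z ≠ 0`. -/
theorem stmt17 {H : Type*} [NormedAddCommGroup H] [InnerProductSpace ℂ H] [CompleteSpace H]
    (P : ℕ → H →L[ℂ] H)
    (hP : ∀ k, IsIdempotentElem (P k) ∧ IsSelfAdjoint (P k))
    (horthP : ∀ j k, j ≠ k → P j * P k = 0)
    (Z : H →L[ℂ] H) (hZ : IsIdempotentElem Z ∧ IsSelfAdjoint Z) (hZ0 : Z ≠ 0)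
    (A : H →ₗ.[ℂ] H) (hdense : Dense (A.domain : Set H))
    (hnn : ∀ ξ : A.domain, 0 ≤ (inner ℂ (A ξ) (ξ : H) : ℂ).re)
    (hrel : ∀ N : ℕ, ∃ B : A.domain → H,
      (∀ ξ : A.domain, 0 ≤ (inner ℂ (B ξ) (ξ : H) : ℂ).re) ∧
        ∀ ξ : A.domain, A ξ = (N : ℝ) • Z (ξ : H) + B ξ) :
    False :=
  stmt17_general Z hZ hZ0 A hdense hrel
end
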